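/- arXiv:2009.07550 — 4 statements merged into one kernel-verified Lean document; each statement's English description precedes it below -/
import Mathlib

section
/- Let P_0,…,P_n be complex polynomials, P_j(z) = Σ_{α=0}^{d} c_{jα} z^α, with P_n·P_0 not identically zero and d = max_j deg P_j > 0, and set Q_α(t) = Σ_{j=0}^{n} c_{jα}(−t)^j. Let φ be holomorphic on an open set containing a piecewise smooth contour C and satisfy Σ_{α=0}^{d} (Q_α φ)^{(α)}(t) ≡ 0 there. Assume that for every 0 ≤ j ≤ n and 0 ≤ α ≤ d the integrals ∫_C ((−t)^j φ(t))^{(α)} e^{−zt} dt converge absolutely with respect to arc length of C, locally uniformly with respect to z ∈ ℂ, and that the boundary variations [((−t)^j φ)^{(α−1)}(t) e^{−zt}]_C vanish for all 0 ≤ j ≤ n and 1 ≤ α ≤ d. Then w(z) = (1/(2πi)) ∫_C φ(t) e^{−zt} dt defines an entire function satisfying Σ_{j=0}^{n} P_j(z) w^{(j)}(z) = 0. -/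
/-!
Put `J_j(z) = ∫_C (−t)^j φ(t) e^{−zt} dt`. Integrating by parts `α` times, the boundary
terms being the vanishing variations, gives `∫_C ((−t)^j φ)^{(α)}(t) e^{−zt} dt = z^α J_j(z)`.
Hence `Σ_j P_j(z) J_j(z) = ∫_C Σ_α (Q_α φ)^{(α)}(t) e^{−zt} dt = 0`, and differentiation
under the integral sign gives `w^{(j)} = J_j / (2πi)`. For `n = 0` there is no bound on
`t φ(t) e^{−zt}` to differentiate with; instead `P_0 w = 0` with `P_0 ≢ 0` and `w`
continuous forces `w = 0`.
-/

open Complex MeasureTheory Filter Set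

noncomputable section

/- A contour is a piecewise continuously differentiable path `γ : ℝ → ℂ` (the parameter
interval, possibly unbounded, being reparametrized to all of `ℝ`); contour integrals
`∫_C F(t) dt` are `∫ s, F (γ s) * γ' s`, and the variation `[Ψ]_C` is
`lim_{s→+∞} Ψ(γ s) − lim_{s→−∞} Ψ(γ s)`. -/

open Finset Topology

theorem integral_eq_zero_of_hasDerivAt_off_countable_of_tendsto {E : Type*}
    [NormedAddCommGroup E] [NormedSpace ℝ E] [CompleteSpace E] {T : Set ℝ} (hT : T.Countable)
    {f f' : ℝ → E} {l : E} (hf : Continuous f) (hderiv : ∀ s ∉ T, HasDerivAt f (f' s) s)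
    (hf' : Integrable f') (htop : Tendsto f atTop (𝓝 l)) (hbot : Tendsto f atBot (𝓝 l)) :
    ∫ s, f' s = 0 := by
  have hneg : Tendsto (fun k : ℕ => -(k : ℝ)) atTop atBot :=
    tendsto_neg_atBot_iff.2 tendsto_natCast_atTop_atTop
  have hlim : Tendsto (fun k : ℕ => ∫ s in -(k : ℝ)..k, f' s) atTop (𝓝 (∫ s, f' s)) :=
    intervalIntegral_tendsto_integral hf' hneg tendsto_natCast_atTop_atTop
  have hftc (k : ℕ) : ∫ s in -(k : ℝ)..k, f' s = f k - f (-(k : ℝ)) :=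
    integral_eq_of_hasDerivAt_off_countable f f' hT hf.continuousOn
      (fun s hs => hderiv s hs.2) hf'.intervalIntegrable
  have hvar : Tendsto (fun k : ℕ => f k - f (-(k : ℝ))) atTop (𝓝 (l - l)) :=
    (htop.comp tendsto_natCast_atTop_atTop).sub (hbot.comp hneg)
  rw [sub_self] at hvar
  exact tendsto_nhds_unique (hlim.congr hftc) hvar

theorem AnalyticAt.iteratedDeriv {𝕜 F : Type*} [NontriviallyNormedField 𝕜]
    [NormedAddCommGroup F] [NormedSpace 𝕜 F] [CompleteSpace F] {f : 𝕜 → F} {x : 𝕜}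
    (hf : AnalyticAt 𝕜 f x) (n : ℕ) : AnalyticAt 𝕜 (iteratedDeriv n f) x := by
  induction n with
  | zero => simpa using hf
  | succ n ih => simpa only [iteratedDeriv_succ] using ih.deriv

theorem eq_zero_of_polynomial_mul_eq_zero {f : ℂ → ℂ} (hf : Continuous f) {a : ℕ → ℂ} {d : ℕ}
    (ha : ∃ α ≤ d, a α ≠ 0) (h : ∀ z, (∑ α ∈ range (d + 1), a α * z ^ α) * f z = 0) :
    f = 0 := by
  set p : Polynomial ℂ := ∑ α ∈ range (d + 1), Polynomial.C (a α) * Polynomial.X ^ α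
  have hp_eval (z : ℂ) : p.eval z = ∑ α ∈ range (d + 1), a α * z ^ α := by
    simp [p, Polynomial.eval_finsetSum]
  have hp : p ≠ 0 := by
    obtain ⟨α, hα, haα⟩ := ha
    refine ne_of_apply_ne (Polynomial.coeff · α) ?_
    simpa [p, Polynomial.finsetSum_coeff, Polynomial.coeff_C_mul_X_pow, Nat.lt_succ_iff.2 hα]
      using haα
  have hdense : Dense {z | p.IsRoot z}ᶜ :=
    (Polynomial.finite_setOfPred_isRoot hp).countable.dense_compl ℂ
  refine hf.ext_on hdense continuous_const fun z hz => ?_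
  exact (mul_eq_zero.1 (hp_eval z ▸ h z)).resolve_left hz

def contourLaplace (F : ℂ → ℂ) (γ γ' : ℝ → ℂ) (z : ℂ) : ℂ :=
  ∫ s, F (γ s) * cexp (-z * γ s) * γ' s

/-- Absolute convergence of `contourLaplace F γ γ' z`, locally uniformly in `z`. -/
def LaplaceDominated (F : ℂ → ℂ) (γ γ' : ℝ → ℂ) : Prop :=
  ∀ r : ℝ, 0 < r → ∃ g : ℝ → ℝ, Integrable g ∧ ∀ z : ℂ, ‖z‖ ≤ r →
    Integrable (fun s => F (γ s) * cexp (-z * γ s) * γ' s) ∧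
    ∀ s, ‖F (γ s) * cexp (-z * γ s)‖ * ‖γ' s‖ ≤ g s

section contourLaplace

variable {F : ℂ → ℂ} {γ γ' : ℝ → ℂ}

theorem LaplaceDominated.integrable (hF : LaplaceDominated F γ γ') (z : ℂ) :
    Integrable (fun s => F (γ s) * cexp (-z * γ s) * γ' s) :=
  let ⟨_, _, hg⟩ := hF (‖z‖ + 1) (by positivity)
  (hg z (by linarith)).1

theorem LaplaceDominated.exists_bound_on_ball (hF : LaplaceDominated F γ γ') (z₀ : ℂ) :
    ∃ g : ℝ → ℝ, Integrable g ∧ ∀ z ∈ Metric.ball z₀ 1, ∀ s,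
      ‖F (γ s) * cexp (-z * γ s) * γ' s‖ ≤ g s := by
  obtain ⟨g, hg, hbound⟩ := hF (‖z₀‖ + 1) (by positivity)
  refine ⟨g, hg, fun z hz s => ?_⟩
  rw [norm_mul]
  exact (hbound z (norm_le_of_mem_closedBall (Metric.ball_subset_closedBall hz))).2 s

theorem continuous_contourLaplace (hF : LaplaceDominated F γ γ') :
    Continuous (contourLaplace F γ γ') := by
  refine continuous_iff_continuousAt.2 fun z₀ => ?_
  obtain ⟨g, hg, hbound⟩ := hF.exists_bound_on_ball z₀
  refine continuousAt_of_dominated (.of_forall fun z => (hF.integrable z).aestronglyMeasurable)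
    ?_ hg (.of_forall fun s => by fun_prop)
  filter_upwards [Metric.ball_mem_nhds z₀ one_pos] with z hz
  exact .of_forall (hbound z hz)

theorem hasDerivAt_contourLaplace (hF : LaplaceDominated F γ γ')
    (hF' : LaplaceDominated (fun t => -t * F t) γ γ') (z₀ : ℂ) :
    HasDerivAt (contourLaplace F γ γ') (contourLaplace (fun t => -t * F t) γ γ' z₀) z₀ := by
  obtain ⟨g, hg, hbound⟩ := hF'.exists_bound_on_ball z₀
  refine (hasDerivAt_integral_of_dominated_loc_of_deriv_le (Metric.ball_mem_nhds z₀ one_pos)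
    (.of_forall fun z => (hF.integrable z).aestronglyMeasurable) (hF.integrable z₀)
    (hF'.integrable z₀).aestronglyMeasurable (.of_forall fun s z hz => hbound z hz s) hg
    (.of_forall fun s z _ => ?_)).2
  refine ((((hasDerivAt_id z).neg.mul_const (γ s)).cexp.const_mul (F (γ s))).mul_const
    (γ' s)).congr_deriv ?_
  simp only [Pi.neg_apply, id]
  ring

theorem iteratedDeriv_contourLaplace {m : ℕ}
    (hF : ∀ j ≤ m, LaplaceDominated (fun t => (-t) ^ j * F t) γ γ') :
    ∀ j ≤ m, iteratedDeriv j (contourLaplace F γ γ') =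
      contourLaplace (fun t => (-t) ^ j * F t) γ γ' := by
  intro j
  induction j with
  | zero => intro _; simp
  | succ j ih =>
    intro hj
    ext z
    have hpow : (fun t => (-t) ^ (j + 1) * F t) = fun t => -t * ((-t) ^ j * F t) := by
      ext t; ring
    rw [iteratedDeriv_succ, ih (by omega), hpow]
    exact (hasDerivAt_contourLaplace (hF j (by omega)) (hpow ▸ hF (j + 1) hj) z).deriv

variable {T : Set ℝ} {z : ℂ}

theorem contourLaplace_deriv (hF : ∀ s, DifferentiableAt ℂ F (γ s)) (hγ : Continuous γ)
    (hT : T.Countable) (hγ' : ∀ s ∉ T, HasDerivAt γ (γ' s) s)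
    (hint : Integrable (fun s => F (γ s) * cexp (-z * γ s) * γ' s))
    (hint' : Integrable (fun s => deriv F (γ s) * cexp (-z * γ s) * γ' s)) {l : ℂ}
    (htop : Tendsto (fun s => F (γ s) * cexp (-z * γ s)) atTop (𝓝 l))
    (hbot : Tendsto (fun s => F (γ s) * cexp (-z * γ s)) atBot (𝓝 l)) :
    contourLaplace (deriv F) γ γ' z = z * contourLaplace F γ γ' z := by
  have hcont : Continuous fun s => F (γ s) * cexp (-z * γ s) :=
    (continuous_iff_continuousAt.2 fun s => (hF s).continuousAt.comp hγ.continuousAt).mul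
      (by fun_prop)
  have hderiv (s : ℝ) (hs : s ∉ T) : HasDerivAt (fun s => F (γ s) * cexp (-z * γ s))
      (deriv F (γ s) * cexp (-z * γ s) * γ' s - z * (F (γ s) * cexp (-z * γ s) * γ' s)) s := by
    refine (((hF s).hasDerivAt.comp s (hγ' s hs)).mul
      ((hγ' s hs).const_mul (-z)).cexp).congr_deriv ?_
    simp only [Function.comp_apply]
    ring
  have := integral_eq_zero_of_hasDerivAt_off_countable_of_tendsto hT hcont hderiv
    (hint'.sub (hint.const_mul z)) htop hbot
  rwa [integral_sub hint' (hint.const_mul z), integral_const_mul, sub_eq_zero] at this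

theorem contourLaplace_iteratedDeriv (hF : ∀ s, AnalyticAt ℂ F (γ s)) (hγ : Continuous γ)
    (hT : T.Countable) (hγ' : ∀ s ∉ T, HasDerivAt γ (γ' s) s) {m : ℕ}
    (hint : ∀ α ≤ m, Integrable (fun s => iteratedDeriv α F (γ s) * cexp (-z * γ s) * γ' s))
    (hvar : ∀ α < m, ∃ l, Tendsto (fun s => iteratedDeriv α F (γ s) * cexp (-z * γ s)) atTop
      (𝓝 l) ∧ Tendsto (fun s => iteratedDeriv α F (γ s) * cexp (-z * γ s)) atBot (𝓝 l)) :
    contourLaplace (iteratedDeriv m F) γ γ' z = z ^ m * contourLaplace F γ γ' z := by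
  induction m with
  | zero => simp
  | succ m ih =>
    obtain ⟨l, htop, hbot⟩ := hvar m m.lt_succ_self
    have hint' := hint (m + 1) le_rfl
    rw [iteratedDeriv_succ] at hint' ⊢
    rw [contourLaplace_deriv (fun s => ((hF s).iteratedDeriv m).differentiableAt) hγ hT hγ'
      (hint m m.le_succ) hint' htop hbot, ih (fun α hα => hint α (by omega))
      (fun α hα => hvar α (by omega)), pow_succ]
    ring

end contourLaplace

theorem sum_polynomial_mul_contourLaplace_eq_zero {n d : ℕ} {c : ℕ → ℕ → ℂ} {φ : ℂ → ℂ}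
    {γ γ' : ℝ → ℂ} {T : Set ℝ} (hφ : ∀ s, AnalyticAt ℂ φ (γ s))
    (hODE : ∀ s, ∑ α ∈ range (d + 1),
      iteratedDeriv α (fun t => (∑ j ∈ range (n + 1), c j α * (-t) ^ j) * φ t) (γ s) = 0)
    (hγ : Continuous γ) (hT : T.Countable) (hγ' : ∀ s ∉ T, HasDerivAt γ (γ' s) s)
    (hdom : ∀ j ≤ n, ∀ α ≤ d,
      LaplaceDominated (iteratedDeriv α (fun t => (-t) ^ j * φ t)) γ γ')
    (hvar : ∀ j ≤ n, ∀ α < d, ∀ z, ∃ l,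
      Tendsto (fun s => iteratedDeriv α (fun t => (-t) ^ j * φ t) (γ s) * cexp (-z * γ s))
        atTop (𝓝 l) ∧
      Tendsto (fun s => iteratedDeriv α (fun t => (-t) ^ j * φ t) (γ s) * cexp (-z * γ s))
        atBot (𝓝 l))
    (z : ℂ) :
    ∑ j ∈ range (n + 1), (∑ α ∈ range (d + 1), c j α * z ^ α) *
      contourLaplace (fun t => (-t) ^ j * φ t) γ γ' z = 0 := by
  set D : ℕ → ℕ → ℂ → ℂ := fun j α => iteratedDeriv α (fun t => (-t) ^ j * φ t)
  have hanalytic (j : ℕ) (s : ℝ) : AnalyticAt ℂ (fun t => (-t) ^ j * φ t) (γ s) :=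
    (analyticAt_id.neg.pow j).mul (hφ s)
  have hIBP {j α : ℕ} (hj : j ≤ n) (hα : α ≤ d) :
      contourLaplace (D j α) γ γ' z =
        z ^ α * contourLaplace (fun t => (-t) ^ j * φ t) γ γ' z :=
    contourLaplace_iteratedDeriv (hanalytic j) hγ hT hγ'
      (fun β hβ => (hdom j hj β (hβ.trans hα)).integrable z)
      (fun β hβ => hvar j hj β (hβ.trans_le hα) z)
  have hint {j α : ℕ} (hj : j ∈ range (n + 1)) (hα : α ∈ range (d + 1)) :
      Integrable fun s => c j α * (D j α (γ s) * cexp (-z * γ s) * γ' s) :=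
    ((hdom j (mem_range_succ_iff.1 hj) α (mem_range_succ_iff.1 hα)).integrable z).const_mul _
  have hintegrand_zero (s : ℝ) :
      ∑ α ∈ range (d + 1), ∑ j ∈ range (n + 1), c j α * D j α (γ s) = 0 := by
    rw [← hODE s]
    refine sum_congr rfl fun α _ => ?_
    have hsum : (fun t => (∑ j ∈ range (n + 1), c j α * (-t) ^ j) * φ t) =
        fun t => ∑ j ∈ range (n + 1), c j α * ((-t) ^ j * φ t) := by
      ext t
      simp only [sum_mul, mul_assoc]
    rw [hsum,
      iteratedDeriv_fun_sum fun j _ => contDiffAt_const.mul (hanalytic j s).contDiffAt]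
    exact sum_congr rfl fun j _ => (iteratedDeriv_const_mul _ (hanalytic j s).contDiffAt).symm
  calc ∑ j ∈ range (n + 1), (∑ α ∈ range (d + 1), c j α * z ^ α) *
        contourLaplace (fun t => (-t) ^ j * φ t) γ γ' z
      = ∑ j ∈ range (n + 1), ∑ α ∈ range (d + 1), c j α * contourLaplace (D j α) γ γ' z := by
        refine sum_congr rfl fun j hj => ?_
        rw [sum_mul]
        refine sum_congr rfl fun α hα => ?_
        rw [hIBP (mem_range_succ_iff.1 hj) (mem_range_succ_iff.1 hα), mul_assoc]
    _ = ∫ s, ∑ α ∈ range (d + 1), ∑ j ∈ range (n + 1),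
          c j α * (D j α (γ s) * cexp (-z * γ s) * γ' s) := by
        rw [sum_comm, integral_finsetSum _ fun α hα =>
          integrable_finsetSum _ fun j hj => hint hj hα]
        refine sum_congr rfl fun α hα => ?_
        rw [integral_finsetSum _ fun j hj => hint hj hα]
        simp only [contourLaplace, integral_const_mul]
    _ = 0 := by
        simp only [← mul_assoc, ← sum_mul, hintegrand_zero, zero_mul, integral_zero]

theorem statement0_general
    (n d : ℕ) (c : ℕ → ℕ → ℂ)
    -- `P_j(z) = Σ_{α ≤ d} c_{jα} z^α`; `P_0` not identically zero
    (hP0 : ∃ α ≤ d, c 0 α ≠ 0)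
    -- `φ` is holomorphic on an open set `U` containing the contour, and satisfies
    -- `Σ_{α ≤ d} (Q_α φ)^{(α)} ≡ 0` there, where `Q_α(t) = Σ_{j ≤ n} c_{jα} (−t)^j`
    (U : Set ℂ) (hU : IsOpen U) (φ : ℂ → ℂ) (hφ : DifferentiableOn ℂ φ U)
    (hODE : ∀ t ∈ U,
      ∑ α ∈ Finset.range (d + 1),
        iteratedDeriv α (fun s => (∑ j ∈ Finset.range (n + 1), c j α * (-s) ^ j) * φ s) t = 0)
    -- the contour: a continuous, piecewise continuously differentiable path in `U`
    (γ γ' : ℝ → ℂ) (hγU : ∀ s, γ s ∈ U) (hγc : Continuous γ)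
    (T : Set ℝ) (hT : T.Countable) (hγ' : ∀ s ∉ T, HasDerivAt γ (γ' s) s)
    -- the integrals `∫_C ((−t)^j φ(t))^{(α)} e^{−zt} dt` converge absolutely with respect
    -- to arc length, locally uniformly with respect to `z`
    (hconv : ∀ j ≤ n, ∀ α ≤ d, ∀ r : ℝ, 0 < r → ∃ g : ℝ → ℝ,
      MeasureTheory.Integrable g ∧
      ∀ z : ℂ, ‖z‖ ≤ r →
        MeasureTheory.Integrable (fun s : ℝ =>
          iteratedDeriv α (fun t => (-t) ^ j * φ t) (γ s) * Complex.exp (-z * γ s) * γ' s) ∧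
        ∀ s : ℝ, ‖iteratedDeriv α (fun t => (-t) ^ j * φ t) (γ s) *
            Complex.exp (-z * γ s)‖ * ‖γ' s‖ ≤ g s)
    -- the boundary variations `[((−t)^j φ)^{(α−1)}(t) e^{−zt}]_C` vanish
    (hbd : ∀ j ≤ n, ∀ α, 1 ≤ α → α ≤ d → ∀ z : ℂ, ∃ l : ℂ,
      Filter.Tendsto (fun s : ℝ => iteratedDeriv (α - 1) (fun t => (-t) ^ j * φ t) (γ s) *
        Complex.exp (-z * γ s)) Filter.atTop (nhds l) ∧
      Filter.Tendsto (fun s : ℝ => iteratedDeriv (α - 1) (fun t => (-t) ^ j * φ t) (γ s) *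
        Complex.exp (-z * γ s)) Filter.atBot (nhds l))
    -- the Laplace contour integral
    (w : ℂ → ℂ)
    (hw : ∀ z : ℂ, w z = (1 / (2 * Real.pi * Complex.I)) *
      ∫ s : ℝ, φ (γ s) * Complex.exp (-z * γ s) * γ' s) :
    Differentiable ℂ w ∧
      ∀ z : ℂ, ∑ j ∈ Finset.range (n + 1),
        (∑ α ∈ Finset.range (d + 1), c j α * z ^ α) * iteratedDeriv j w z = 0 := by
  have hφa (s : ℝ) : AnalyticAt ℂ φ (γ s) := hφ.analyticAt (hU.mem_nhds (hγU s))
  have hdom (j : ℕ) (hj : j ≤ n) : LaplaceDominated (fun t => (-t) ^ j * φ t) γ γ' :=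
    iteratedDeriv_zero (f := fun t => (-t) ^ j * φ t) ▸ hconv j hj 0 d.zero_le
  have hkey := sum_polynomial_mul_contourLaplace_eq_zero hφa (fun s => hODE _ (hγU s)) hγc hT
    hγ' hconv fun j hj α hα z => by
      simpa only [Nat.add_sub_cancel] using hbd j hj (α + 1) le_add_self hα z
  have hw' : w = fun z => 1 / (2 * Real.pi * Complex.I) * contourLaplace φ γ γ' z := funext hw
  refine ⟨?_, fun z => ?_⟩
  · rcases n.eq_zero_or_pos with rfl | hn
    · have hzero : contourLaplace φ γ γ' = 0 :=
        eq_zero_of_polynomial_mul_eq_zero (continuous_contourLaplace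
          (by simpa only [pow_zero, one_mul] using hdom 0 le_rfl)) hP0 (by simpa using hkey)
      rw [hw', hzero]
      simp
    · rw [hw']
      exact fun z => ((hasDerivAt_contourLaplace
        (by simpa only [pow_zero, one_mul] using hdom 0 hn.le)
        (by simpa only [pow_one] using hdom 1 hn) z).const_mul _).differentiableAt
  · have hderivs (j : ℕ) (hj : j ≤ n) : iteratedDeriv j w z =
        1 / (2 * Real.pi * Complex.I) * contourLaplace (fun t => (-t) ^ j * φ t) γ γ' z := by
      rw [hw', iteratedDeriv_const_mul_field, iteratedDeriv_contourLaplace hdom j hj]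
    have hfactor :
        ∑ j ∈ range (n + 1), (∑ α ∈ range (d + 1), c j α * z ^ α) * iteratedDeriv j w z =
          1 / (2 * Real.pi * Complex.I) * ∑ j ∈ range (n + 1),
            (∑ α ∈ range (d + 1), c j α * z ^ α) *
              contourLaplace (fun t => (-t) ^ j * φ t) γ γ' z := by
      rw [mul_sum]
      refine sum_congr rfl fun j hj => ?_
      rw [hderivs j (mem_range_succ_iff.1 hj)]
      ring
    rw [hfactor, hkey z, mul_zero]

theorem statement0
    (n d : ℕ) (hd : 0 < d) (c : ℕ → ℕ → ℂ)
    -- `P_j(z) = Σ_{α ≤ d} c_{jα} z^α`; `P_n · P_0` not identically zero;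
    -- `d = max_j deg P_j > 0`
    (hPn : ∃ α ≤ d, c n α ≠ 0) (hP0 : ∃ α ≤ d, c 0 α ≠ 0)
    (hdmax : ∃ j ≤ n, c j d ≠ 0)
    -- `φ` is holomorphic on an open set `U` containing the contour, and satisfies
    -- `Σ_{α ≤ d} (Q_α φ)^{(α)} ≡ 0` there, where `Q_α(t) = Σ_{j ≤ n} c_{jα} (−t)^j`
    (U : Set ℂ) (hU : IsOpen U) (φ : ℂ → ℂ) (hφ : DifferentiableOn ℂ φ U)
    (hODE : ∀ t ∈ U,
      ∑ α ∈ Finset.range (d + 1),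
        iteratedDeriv α (fun s => (∑ j ∈ Finset.range (n + 1), c j α * (-s) ^ j) * φ s) t = 0)
    -- the contour: a continuous, piecewise continuously differentiable path in `U`
    (γ γ' : ℝ → ℂ) (hγU : ∀ s, γ s ∈ U) (hγc : Continuous γ)
    (T : Set ℝ) (hT : T.Countable) (hγ' : ∀ s ∉ T, HasDerivAt γ (γ' s) s)
    -- the integrals `∫_C ((−t)^j φ(t))^{(α)} e^{−zt} dt` converge absolutely with respect
    -- to arc length, locally uniformly with respect to `z`
    (hconv : ∀ j ≤ n, ∀ α ≤ d, ∀ r : ℝ, 0 < r → ∃ g : ℝ → ℝ,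
      MeasureTheory.Integrable g ∧
      ∀ z : ℂ, ‖z‖ ≤ r →
        MeasureTheory.Integrable (fun s : ℝ =>
          iteratedDeriv α (fun t => (-t) ^ j * φ t) (γ s) * Complex.exp (-z * γ s) * γ' s) ∧
        ∀ s : ℝ, ‖iteratedDeriv α (fun t => (-t) ^ j * φ t) (γ s) *
            Complex.exp (-z * γ s)‖ * ‖γ' s‖ ≤ g s)
    -- the boundary variations `[((−t)^j φ)^{(α−1)}(t) e^{−zt}]_C` vanish
    (hbd : ∀ j ≤ n, ∀ α, 1 ≤ α → α ≤ d → ∀ z : ℂ, ∃ l : ℂ,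
      Filter.Tendsto (fun s : ℝ => iteratedDeriv (α - 1) (fun t => (-t) ^ j * φ t) (γ s) *
        Complex.exp (-z * γ s)) Filter.atTop (nhds l) ∧
      Filter.Tendsto (fun s : ℝ => iteratedDeriv (α - 1) (fun t => (-t) ^ j * φ t) (γ s) *
        Complex.exp (-z * γ s)) Filter.atBot (nhds l))
    -- the Laplace contour integral
    (w : ℂ → ℂ)
    (hw : ∀ z : ℂ, w z = (1 / (2 * Real.pi * Complex.I)) *
      ∫ s : ℝ, φ (γ s) * Complex.exp (-z * γ s) * γ' s) :
    Differentiable ℂ w ∧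
      ∀ z : ℂ, ∑ j ∈ Finset.range (n + 1),
        (∑ α ∈ Finset.range (d + 1), c j α * z ^ α) * iteratedDeriv j w z = 0 :=
  statement0_general n d c hP0 U hU φ hφ hODE γ γ' hγU hγc T hT hγ' hconv hbd w hw
end
end

section
/- Suppose the sum Σ_k λ_k of the residues λ_k = res_{t_k}[Q_0/Q_1] of Q_0/Q_1 over all its poles t_k is an integer, so that the kernel φ_L is single-valued on {t : |t| > R_0}. Then for R > R_0 the sum Λ = Σ_{ν=0}^{n−q} Λ_ν equals −(1/(2πi))∮_{|t|=R} φ_L(t)e^{−zt} dt and satisfies |Λ(z)| ≤ A R e^{R|z|} for all z, where A = max_{|t|=R}|φ_L(t)|; consequently Λ either vanishes identically or is a sub-normal solution of L[w] = 0, i.e. an entire solution of order of growth at most 1 (strictly less than the generic order 1 + 1/(n−q)). -/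
open Complex MeasureTheory Filter Set

noncomputable section

/-- The (open) sector `{t : |t| > R₀, |arg t| < π}`. -/
def Sector (R0 : ℝ) : Set ℂ := {t : ℂ | R0 < ‖t‖ ∧ |Complex.arg t| < Real.pi}

/-- The integral of `F` over the contour `C_{R,α,β}` consisting of the ray `t = r e^{iα}`
traversed from `r = +∞` to `r = R`, the circular arc `|t| = R` from `Re^{iα}` through
`Re^{i(α+β)/2}` to `Re^{iβ}`, and the ray `t = r e^{iβ}` traversed from `r = R` to `r = +∞`. -/
def ContourIntegral (F : ℂ → ℂ) (R α β : ℝ) : ℂ :=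
  -(∫ r in Set.Ioi R, F ((r:ℂ) * Complex.exp (Complex.I * α)) * Complex.exp (Complex.I * α))
  + (∫ ϑ in α..β, F ((R:ℂ) * Complex.exp (Complex.I * ϑ)) * (Complex.I * R * Complex.exp (Complex.I * ϑ)))
  + (∫ r in Set.Ioi R, F ((r:ℂ) * Complex.exp (Complex.I * β)) * Complex.exp (Complex.I * β))

/-- The Laplace contour integral `(1/(2πi)) ∫_{C_{R,α,β}} φ(t) e^{-zt} dt`. -/
def LaplaceContour (φ : ℂ → ℂ) (R α β : ℝ) (z : ℂ) : ℂ :=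
  (1 / (2 * Real.pi * Complex.I)) * ContourIntegral (fun t => φ t * Complex.exp (-z * t)) R α β

/-- `w` is an entire solution of `w^{(n)} + Σ_{j<n} (a_j + b_j z) w^{(j)} = 0`. -/
def SolvesL (n : ℕ) (a b : ℕ → ℂ) (w : ℂ → ℂ) : Prop :=
  Differentiable ℂ w ∧
    ∀ z : ℂ, iteratedDeriv n w z + ∑ j ∈ Finset.range n, (a j + b j * z) * iteratedDeriv j w z = 0


/-- The maximum modulus `M(r,f)`. -/
def maxModulus (f : ℂ → ℂ) (r : ℝ) : ℝ :=
  sSup ((fun z => ‖f z‖) '' Metric.sphere (0:ℂ) r)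

/-- The order of growth `ρ(f) = limsup_{r→∞} log log M(r,f) / log r`. -/
def orderOfGrowth (f : ℂ → ℂ) : ℝ :=
  Filter.limsup (fun r => Real.log (Real.log (maxModulus f r)) / Real.log r) Filter.atTop

/-! The arcs of the contours `C_{R,θ_{2ν+1},θ_{2ν-1}}`, `0 ≤ ν ≤ n - q`, tile the circle `|t| = R`
once clockwise, and consecutive contours run along their common ray in opposite directions. As
`φ_L` is single-valued, the two outer rays at `θ_{-1}` and `θ_{2(n-q)+1} = θ_{-1} + 2π` cancel as
well, so `Λ` is minus the circle integral. Estimating that integral trivially gives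
`|Λ(z)| ≤ A R e^{R|z|}`; if `Λ ≢ 0`, the maximum principle keeps `M(r, Λ)` away from `0`, so
`|log M(r, Λ)| = O(r)` and the order of `Λ` is at most `1`. -/

open Finset

theorem SolvesL.sum {n : ℕ} {a b : ℕ → ℂ} {ι : Type*} (s : Finset ι) {w : ι → ℂ → ℂ}
    (hw : ∀ i ∈ s, SolvesL n a b (w i)) : SolvesL n a b (fun z => ∑ i ∈ s, w i z) := by
  have hderiv : ∀ k z, iteratedDeriv k (fun z => ∑ i ∈ s, w i z) z =
      ∑ i ∈ s, iteratedDeriv k (w i) z := fun k z => by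
    simp only [iteratedDeriv_eq_iteratedFDeriv,
      iteratedFDeriv_fun_sum_apply fun i hi => (hw i hi).1.contDiff.contDiffAt,
      _root_.sum_apply]
  refine ⟨Differentiable.fun_sum fun i hi => (hw i hi).1, fun z => ?_⟩
  simp only [hderiv, mul_sum]
  rw [sum_comm, ← sum_add_distrib]
  exact sum_eq_zero fun i hi => (hw i hi).2 z

-- Parametrized by the unit direction `u` rather than by an angle, so that the angles `θ` and
-- `θ + 2π` give literally the same ray.
def rayIntegral (F : ℂ → ℂ) (R : ℝ) (u : ℂ) : ℂ :=
  ∫ r in Ioi R, F (r * u) * u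

theorem contourIntegral_eq_rayIntegral_sub_add (F : ℂ → ℂ) (R α β : ℝ) :
    ContourIntegral F R α β = rayIntegral F R (exp (I * β)) - rayIntegral F R (exp (I * α)) +
      ∫ ϑ in α..β, deriv (circleMap 0 R) ϑ • F (circleMap 0 R ϑ) := by
  have harc : ∀ ϑ : ℝ, F (R * exp (I * ϑ)) * (I * R * exp (I * ϑ)) =
      deriv (circleMap 0 R) ϑ • F (circleMap 0 R ϑ) := fun ϑ => by
    simp only [deriv_circleMap, circleMap, zero_add, smul_eq_mul, mul_comm I (ϑ : ℂ)]
    ring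
  simp only [ContourIntegral, rayIntegral, harc]
  ring

theorem sum_contourIntegral_eq_neg_circleIntegral {F : ℂ → ℂ} {R : ℝ}
    (hF : ContinuousOn F (Metric.sphere 0 |R|)) {θ : ℕ → ℝ} {m : ℕ}
    (hθ : θ m = θ 0 + 2 * Real.pi) :
    ∑ k ∈ range m, ContourIntegral F R (θ (k + 1)) (θ k) = -∮ z in C(0, R), F z := by
  set g : ℝ → ℂ := fun ϑ => deriv (circleMap 0 R) ϑ • F (circleMap 0 R ϑ)
  have hg : Continuous g := by
    simp only [g, deriv_circleMap]
    exact ((continuous_circleMap 0 R).mul continuous_const).smul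
      (hF.comp_continuous (continuous_circleMap 0 R) (circleMap_mem_sphere' 0 R))
  have hg_per : Function.Periodic g (2 * Real.pi) := fun ϑ => by
    simp only [g, deriv_circleMap, periodic_circleMap 0 R ϑ]
  have hexp : exp (I * θ m) = exp (I * θ 0) := by
    rw [hθ, ofReal_add, mul_add, exp_add, ofReal_mul, ofReal_ofNat,
      show I * (2 * Real.pi) = 2 * Real.pi * I by ring, exp_two_pi_mul_I, mul_one]
  have harcs : ∑ k ∈ range m, ∫ ϑ in θ (k + 1)..θ k, g ϑ = -∮ z in C(0, R), F z := calc
    _ = -∑ k ∈ range m, ∫ ϑ in θ k..θ (k + 1), g ϑ := by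
      rw [← sum_neg_distrib]
      exact sum_congr rfl fun k _ => intervalIntegral.integral_symm _ _
    _ = -∫ ϑ in θ 0..θ 0 + 2 * Real.pi, g ϑ := by
      rw [intervalIntegral.sum_integral_adjacent_intervals fun k _ => hg.intervalIntegrable _ _, hθ]
    _ = -∮ z in C(0, R), F z := by
      rw [hg_per.intervalIntegral_add_eq (θ 0) 0, zero_add]
      rfl
  simp only [contourIntegral_eq_rayIntegral_sub_add, sum_add_distrib,
    sum_range_sub' (fun k => rayIntegral F R (exp (I * θ k))), hexp, sub_self, zero_add]
  exact harcs

theorem sum_laplaceContour_eq_neg_circleIntegral {φ : ℂ → ℂ} {R : ℝ}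
    (hφ : ContinuousOn φ (Metric.sphere 0 |R|)) {m : ℕ} (hm : m ≠ 0) (z : ℂ) :
    ∑ ν ∈ range m, LaplaceContour φ R (((2 * ν + 1 : ℤ) * Real.pi) / m)
        (((2 * (ν : ℤ) - 1) * Real.pi) / m) z =
      -((1 / (2 * Real.pi * I)) * ∮ s in C(0, R), φ s * exp (-z * s)) := by
  set θ : ℕ → ℝ := fun k => (2 * k - 1) * Real.pi / m
  have hθ : θ m = θ 0 + 2 * Real.pi := by
    simp only [θ]
    field_simp
    ring
  have hF : ContinuousOn (fun s => φ s * exp (-z * s)) (Metric.sphere 0 |R|) :=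
    hφ.mul (by fun_prop)
  rw [← mul_neg, ← sum_contourIntegral_eq_neg_circleIntegral hF hθ, mul_sum]
  refine sum_congr rfl fun ν _ => ?_
  simp only [LaplaceContour, θ]
  push_cast
  ring_nf

theorem norm_circleIntegral_mul_exp_le {f : ℂ → ℂ} {R A : ℝ} (hR : 0 ≤ R)
    (hf : ∀ t ∈ Metric.sphere (0 : ℂ) R, ‖f t‖ ≤ A) (z : ℂ) :
    ‖(1 / (2 * Real.pi * I)) * ∮ t in C(0, R), f t * exp (-z * t)‖ ≤
      A * R * Real.exp (R * ‖z‖) := by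
  have hint : ‖∮ t in C(0, R), f t * exp (-z * t)‖ ≤
      2 * Real.pi * R * (A * Real.exp (R * ‖z‖)) := by
    refine circleIntegral.norm_integral_le_of_norm_le_const hR fun t ht => ?_
    have ht' : ‖t‖ = R := mem_sphere_zero_iff_norm.mp ht
    have hexp : ‖exp (-z * t)‖ ≤ Real.exp (R * ‖z‖) := by
      simpa [ht', mul_comm] using norm_exp_le_exp_norm (-z * t)
    rw [norm_mul]
    exact mul_le_mul (hf t ht) hexp (norm_nonneg _) ((norm_nonneg _).trans (hf t ht))
  have hc : ‖(1 / (2 * Real.pi * I) : ℂ)‖ = 1 / (2 * Real.pi) := by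
    simp [Real.pi_pos.le]
  rw [norm_mul, hc]
  calc 1 / (2 * Real.pi) * ‖∮ t in C(0, R), f t * exp (-z * t)‖
      ≤ 1 / (2 * Real.pi) * (2 * Real.pi * R * (A * Real.exp (R * ‖z‖))) := by gcongr
    _ = A * R * Real.exp (R * ‖z‖) := by field_simp

theorem norm_le_maxModulus_of_mem_sphere {f : ℂ → ℂ} {r : ℝ}
    (hf : ContinuousOn f (Metric.sphere 0 r)) {z : ℂ} (hz : z ∈ Metric.sphere 0 r) :
    ‖f z‖ ≤ maxModulus f r :=
  le_csSup ((isCompact_sphere 0 r).bddAbove_image hf.norm) ⟨z, hz, rfl⟩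

theorem norm_le_maxModulus {f : ℂ → ℂ} (hf : Differentiable ℂ f) {z : ℂ} {r : ℝ} (hr : 0 < r)
    (hz : ‖z‖ ≤ r) : ‖f z‖ ≤ maxModulus f r := by
  refine Complex.norm_le_of_forall_mem_frontier_norm_le Metric.isBounded_ball hf.diffContOnCl
    (fun w hw => ?_) (by rwa [closure_ball 0 hr.ne', mem_closedBall_zero_iff])
  rw [frontier_ball 0 hr.ne'] at hw
  exact norm_le_maxModulus_of_mem_sphere hf.continuous.continuousOn hw

theorem maxModulus_le {f : ℂ → ℂ} {r M : ℝ} (hr : 0 ≤ r)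
    (hf : ∀ z ∈ Metric.sphere (0 : ℂ) r, ‖f z‖ ≤ M) : maxModulus f r ≤ M :=
  csSup_le ((NormedSpace.sphere_nonempty.mpr hr).image _) (forall_mem_image.mpr hf)

-- In `ℝ`, `sInf` of a set that is not bounded below is `0`, hence the hypothesis `0 ≤ a`.
theorem limsup_le_of_forall_eventually_le_add {ι : Type*} {l : Filter ι} {u : ι → ℝ} {a : ℝ}
    (ha : 0 ≤ a) (h : ∀ ε > 0, ∀ᶠ x in l, u x ≤ a + ε) : limsup u l ≤ a := by
  rw [limsup_eq]
  by_cases hbdd : BddBelow {b | ∀ᶠ x in l, u x ≤ b}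
  · exact le_of_forall_pos_le_add fun ε hε => csInf_le hbdd (h ε hε)
  · rwa [Real.sInf_of_not_bddBelow hbdd]

theorem abs_log_le_of_le_of_le_mul_exp {c C x y : ℝ} (hc : 0 < c) (hcx : c ≤ x)
    (hx : x ≤ C * Real.exp y) (hy : 0 ≤ y) :
    |Real.log x| ≤ |Real.log c| + |Real.log C| + y := by
  have hx₀ : 0 < x := hc.trans_le hcx
  have hC : 0 < C := (mul_pos_iff_of_pos_right (Real.exp_pos y)).mp (hx₀.trans_le hx)
  have hlow := Real.log_le_log hc hcx
  have hup := Real.log_le_log hx₀ hx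
  rw [Real.log_mul hC.ne' (Real.exp_pos y).ne', Real.log_exp] at hup
  refine abs_le.mpr ⟨?_, ?_⟩
  · linarith [neg_abs_le (Real.log c), abs_nonneg (Real.log C)]
  · linarith [le_abs_self (Real.log C), abs_nonneg (Real.log c)]

theorem log_log_le_log_of_abs_log_le {x y : ℝ} (hx : |Real.log x| ≤ y) (hy : 1 ≤ y) :
    Real.log (Real.log x) ≤ Real.log y := by
  rw [← Real.log_abs (Real.log x)]
  rcases (abs_nonneg (Real.log x)).eq_or_lt with h₀ | hpos
  · rw [← h₀, Real.log_zero]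
    exact Real.log_nonneg hy
  · exact Real.log_le_log hpos hx

theorem eventually_log_log_div_log_le {M : ℝ → ℝ} {L ε : ℝ} (hL : 1 ≤ L) (hε : 0 < ε)
    (hM : ∀ᶠ r in atTop, |Real.log (M r)| ≤ L * r) :
    ∀ᶠ r in atTop, Real.log (Real.log (M r)) / Real.log r ≤ 1 + ε := by
  filter_upwards [hM, eventually_ge_atTop 1, Real.tendsto_log_atTop.eventually_gt_atTop 0,
    Real.tendsto_log_atTop.eventually_ge_atTop (Real.log L / ε)] with r hMr hr hlog hlogL
  have hll := log_log_le_log_of_abs_log_le hMr (one_le_mul_of_one_le_of_one_le hL hr)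
  rw [Real.log_mul (by positivity) (by positivity)] at hll
  have hLε : Real.log L ≤ ε * Real.log r := (div_le_iff₀' hε).mp hlogL
  rw [div_le_iff₀ hlog]
  linarith

theorem orderOfGrowth_le_one {f : ℂ → ℂ} (hf : Differentiable ℂ f) {z₀ : ℂ} (hz₀ : f z₀ ≠ 0)
    {C B : ℝ} (hB : 0 ≤ B) (hbound : ∀ z, ‖f z‖ ≤ C * Real.exp (B * ‖z‖)) :
    orderOfGrowth f ≤ 1 := by
  set K := |Real.log ‖f z₀‖| + |Real.log C|
  have hM : ∀ᶠ r in atTop, |Real.log (maxModulus f r)| ≤ (K + B + 1) * r := by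
    filter_upwards [eventually_ge_atTop ‖z₀‖, eventually_ge_atTop 1] with r hr₀ hr
    have hlow := norm_le_maxModulus hf (by linarith) hr₀
    have hup : maxModulus f r ≤ C * Real.exp (B * r) := maxModulus_le (by linarith) fun z hz => by
      simpa only [mem_sphere_zero_iff_norm.mp hz] using hbound z
    calc |Real.log (maxModulus f r)| ≤ K + B * r :=
          abs_log_le_of_le_of_le_mul_exp (norm_pos_iff.mpr hz₀) hlow hup (by positivity)
      _ ≤ (K + B + 1) * r := by nlinarith [show 0 ≤ K by positivity]
  exact limsup_le_of_forall_eventually_le_add zero_le_one fun ε hε =>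
    eventually_log_log_div_log_le (by linarith [show 0 ≤ K by positivity]) hε hM

theorem statement13_general
    (n q : ℕ) (a b : ℕ → ℂ)
    (hq : q < n)
    (R0 : ℝ) (hR00 : 0 ≤ R0)
    -- hence the kernel `φ_L` is single-valued (holomorphic) on `|t| > R0`
    (φL : ℂ → ℂ)
    (hφd : DifferentiableOn ℂ φL {s : ℂ | R0 < ‖s‖})
    -- the contour integral solutions `Λ_ν`, `0 ≤ ν ≤ n − q`, with `θ_k = kπ/(n−q+1)`
    (R : ℝ) (hR : R0 < R)
    (Λ : ℕ → ℂ → ℂ)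
    (hΛ : ∀ ν ≤ n - q, ∀ z : ℂ, Λ ν z =
      LaplaceContour φL R (((2 * ν + 1 : ℤ) * Real.pi) / ((n : ℝ) - q + 1))
        (((2 * (ν : ℤ) - 1) * Real.pi) / ((n : ℝ) - q + 1)) z)
    (hΛsol : ∀ ν ≤ n - q, SolvesL n a b (Λ ν))
    (A : ℝ) (hA : A = sSup ((fun s => ‖φL s‖) '' Metric.sphere (0:ℂ) R)) :
    (∀ z : ℂ, (∑ ν ∈ Finset.range (n - q + 1), Λ ν z) =
      -((1 / (2 * Real.pi * Complex.I)) * ∮ s in C(0, R), φL s * Complex.exp (-z * s))) ∧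
    (∀ z : ℂ, ‖(∑ ν ∈ Finset.range (n - q + 1), Λ ν z)‖ ≤
      A * R * Real.exp (R * ‖z‖)) ∧
    ((∀ z : ℂ, (∑ ν ∈ Finset.range (n - q + 1), Λ ν z) = 0) ∨
      (SolvesL n a b (fun z => ∑ ν ∈ Finset.range (n - q + 1), Λ ν z) ∧
        orderOfGrowth (fun z => ∑ ν ∈ Finset.range (n - q + 1), Λ ν z) ≤ 1 ∧
        orderOfGrowth (fun z => ∑ ν ∈ Finset.range (n - q + 1), Λ ν z) <
          1 + 1 / ((n : ℝ) - q))) := by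
  have hRpos : 0 < R := hR00.trans_lt hR
  have hφR : ContinuousOn φL (Metric.sphere 0 R) := hφd.continuousOn.mono fun s hs => by
    simpa [mem_sphere_zero_iff_norm.mp hs] using hR
  have hm : (n : ℝ) - q + 1 = ((n - q + 1 : ℕ) : ℝ) := by
    push_cast [Nat.cast_sub hq.le]
    ring
  have hsum : ∀ z, ∑ ν ∈ range (n - q + 1), Λ ν z =
      -((1 / (2 * Real.pi * I)) * ∮ s in C(0, R), φL s * exp (-z * s)) := fun z => by
    rw [sum_congr rfl fun ν hν => hΛ ν (Nat.lt_succ_iff.mp (mem_range.mp hν)) z, hm]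
    exact sum_laplaceContour_eq_neg_circleIntegral (by rwa [abs_of_pos hRpos]) (by omega) z
  have hbound : ∀ z, ‖∑ ν ∈ range (n - q + 1), Λ ν z‖ ≤ A * R * Real.exp (R * ‖z‖) :=
    fun z => by
      rw [hsum, norm_neg]
      exact norm_circleIntegral_mul_exp_le hRpos.le
        (fun t ht => hA ▸ norm_le_maxModulus_of_mem_sphere hφR ht) z
  refine ⟨hsum, hbound, ?_⟩
  by_cases hzero : ∀ z, ∑ ν ∈ range (n - q + 1), Λ ν z = 0
  · exact .inl hzero
  obtain ⟨z₀, hz₀⟩ := not_forall.mp hzero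
  have hsol := SolvesL.sum (range (n - q + 1)) fun ν hν =>
    hΛsol ν (Nat.lt_succ_iff.mp (mem_range.mp hν))
  have horder := orderOfGrowth_le_one hsol.1 hz₀ hRpos.le hbound
  have hnq : (0 : ℝ) < n - q := sub_pos.mpr (by exact_mod_cast hq)
  exact .inr ⟨hsol, horder, horder.trans_lt (lt_add_of_pos_right 1 (one_div_pos.mpr hnq))⟩

theorem statement13
    (n q : ℕ) (a b : ℕ → ℂ)
    (hn : 2 ≤ n) (hq : q < n)
    (hbq : b q = (-1 : ℂ) ^ (n - q + 1)) (hbq0 : ∀ j, q < j → b j = 0)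
    (ha0b0 : a 0 ≠ 0 ∨ b 0 ≠ 0)
    (Q0 Q1 : ℂ → ℂ)
    (hQ0 : ∀ s, Q0 s = (-s) ^ n + ∑ j ∈ Finset.range n, a j * (-s) ^ j)
    (hQ1 : ∀ s, Q1 s = ∑ j ∈ Finset.range (q + 1), b j * (-s) ^ j)
    (R0 : ℝ) (hR00 : 0 ≤ R0)
    -- all poles of `Q_0/Q_1` lie in `|t| ≤ R0`
    (hQ1ne : ∀ s : ℂ, R0 < ‖s‖ → Q1 s ≠ 0)
    -- the sum of the residues of `Q_0/Q_1` over all its poles is an integer `S`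
    (S : ℤ)
    (hressum : ∀ R' : ℝ, R0 < R' →
      (1 / (2 * Real.pi * Complex.I)) * (∮ s in C(0, R'), Q0 s / Q1 s) = (S : ℂ))
    -- hence the kernel `φ_L` is single-valued (holomorphic) on `|t| > R0`
    (φL : ℂ → ℂ)
    (hφd : DifferentiableOn ℂ φL {s : ℂ | R0 < ‖s‖})
    (hODE : ∀ s : ℂ, R0 < ‖s‖ →
      Q0 s * φL s + deriv (fun u => Q1 u * φL u) s = 0)
    (hφne : ∃ s : ℂ, R0 < ‖s‖ ∧ φL s ≠ 0)
    -- the contour integral solutions `Λ_ν`, `0 ≤ ν ≤ n − q`, with `θ_k = kπ/(n−q+1)`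
    (R : ℝ) (hR : R0 < R)
    (Λ : ℕ → ℂ → ℂ)
    (hΛ : ∀ ν ≤ n - q, ∀ z : ℂ, Λ ν z =
      LaplaceContour φL R (((2 * ν + 1 : ℤ) * Real.pi) / ((n : ℝ) - q + 1))
        (((2 * (ν : ℤ) - 1) * Real.pi) / ((n : ℝ) - q + 1)) z)
    (hΛsol : ∀ ν ≤ n - q, SolvesL n a b (Λ ν))
    (A : ℝ) (hA : A = sSup ((fun s => ‖φL s‖) '' Metric.sphere (0:ℂ) R)) :
    (∀ z : ℂ, (∑ ν ∈ Finset.range (n - q + 1), Λ ν z) =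
      -((1 / (2 * Real.pi * Complex.I)) * ∮ s in C(0, R), φL s * Complex.exp (-z * s))) ∧
    (∀ z : ℂ, ‖(∑ ν ∈ Finset.range (n - q + 1), Λ ν z)‖ ≤
      A * R * Real.exp (R * ‖z‖)) ∧
    ((∀ z : ℂ, (∑ ν ∈ Finset.range (n - q + 1), Λ ν z) = 0) ∨
      (SolvesL n a b (fun z => ∑ ν ∈ Finset.range (n - q + 1), Λ ν z) ∧
        orderOfGrowth (fun z => ∑ ν ∈ Finset.range (n - q + 1), Λ ν z) ≤ 1 ∧
        orderOfGrowth (fun z => ∑ ν ∈ Finset.range (n - q + 1), Λ ν z) <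
          1 + 1 / ((n : ℝ) - q))) :=
  statement13_general n q a b hq R0 hR00 φL hφd R hR Λ hΛ hΛsol A hA
end
end

section
/- Assume n − q ≥ 2 and set ρ = 1 + 1/(n−q). Let h_0 : ℝ → ℝ be the 2π-periodic function with h_0(ϑ) = −(1/ρ)cos(ρϑ) for |ϑ| ≤ π, and assume each Λ_ν (0 ≤ ν ≤ n−q) is an entire solution of L[w] = 0 of order ρ whose Phragmén–Lindelöf indicator of order ρ is h_ν(ϑ) = h_0(ϑ − 2νπ/(n−q+1)). Then every subset of {Λ_0, Λ_1, …, Λ_{n−q}} consisting of n−q of these functions is linearly independent over ℂ. -/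
open Complex MeasureTheory Filter Set

noncomputable section

/-- The Phragmén–Lindelöf indicator of order `ρ` of `f`:
`h(ϑ) = limsup_{r→∞} log |f(r e^{iϑ})| / r^ρ`. -/
def plIndicator (f : ℂ → ℂ) (ρ ϑ : ℝ) : ℝ :=
  Filter.limsup
    (fun r : ℝ => Real.log ‖f ((r:ℂ) * Complex.exp (Complex.I * ϑ))‖ / r ^ ρ)
    Filter.atTop

/-!
Suppose `∑_{ν ∈ T} g_ν Λ_ν = 0` with every `g_ν ≠ 0`, where `T` misses some index of
`{0, …, m}`, `m = n - q`. Since `h_ν` depends only on `ν mod (m+1)`, we may choose `ν₀ ∈ T` whose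
cyclic predecessor `ν₀ - 1` is not in `T`. In the direction `ϑ = (ν₀ + ⌊m/2⌋ + 1/8) · 2π/(m+1)` the
indicators are the values of `h0` at the points `(k + 1/8) · 2π/(m+1)`, `k ≡ ν₀ + ⌊m/2⌋ - ν`, and
there `h0` is largest at `k = ⌊m/2⌋` and `k = ⌊m/2⌋ + 1`, i.e. at `ν = ν₀` and `ν = ν₀ - 1`.
Hence `h_{ν₀}(ϑ)` strictly exceeds `h_ν(ϑ)` for every other `ν ∈ T`, so along a sequence
`r → ∞` the term `g_{ν₀} Λ_{ν₀}(r e^{iϑ})` outgrows the sum of all the others.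
-/

open scoped Real

namespace Real

variable {α : Type*} {f : Filter α} {u : α → ℝ} {b : ℝ}

/- In `ℝ`, the `limsup` of a function that is not bounded (resp. cobounded) is the junk value `0`,
so a nonzero `limsup` carries the boundedness needed to use it. -/

theorem eventually_lt_of_limsup_lt_of_ne_zero (h₀ : limsup u f ≠ 0) (h : limsup u f < b) :
    ∀ᶠ x in f, u x < b :=
  eventually_lt_of_limsup_lt h (by_contra fun hu => h₀ (limsup_of_not_isBoundedUnder hu))

theorem frequently_lt_of_lt_limsup_of_ne_zero (h₀ : limsup u f ≠ 0) (h : b < limsup u f) :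
    ∃ᶠ x in f, b < u x :=
  frequently_lt_of_lt_limsup (by_contra fun hu => h₀ (limsup_of_not_isCoboundedUnder hu)) h

theorem cos_le_cos_of_abs_le {x y : ℝ} (hy : |y| ≤ π) (hxy : |x| ≤ |y|) : cos y ≤ cos x := by
  rw [← cos_abs x, ← cos_abs y]
  exact cos_le_cos_of_nonneg_of_le_pi (abs_nonneg x) hy hxy

end Real

section Growth

variable {ι : Type*} [DecidableEq ι] {T : Finset ι} {F : ι → ℝ → ℂ} {G : ι → ℂ} {φ : ℝ → ℝ}
  {i₀ : ι}

theorem exists_sum_mul_ne_zero_of_dominant (hφ : Tendsto φ atTop atTop) (hi₀ : i₀ ∈ T)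
    (hG : G i₀ ≠ 0) {c c' : ℝ} (hc : 0 ≤ c) (hc' : c' < c)
    (hlower : ∃ᶠ r in atTop, c < Real.log ‖F i₀ r‖ / φ r)
    (hupper : ∀ i ∈ T.erase i₀, ∀ᶠ r in atTop, Real.log ‖F i r‖ / φ r < c') :
    ∃ r, ∑ i ∈ T, G i * F i r ≠ 0 := by
  set B := ∑ i ∈ T.erase i₀, ‖G i‖
  have hB : ∀ᶠ r in atTop, B < ‖G i₀‖ * Real.exp ((c - c') * φ r) :=
    ((Real.tendsto_exp_atTop.comp (hφ.const_mul_atTop (sub_pos.2 hc'))).const_mul_atTop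
      (norm_pos_iff.2 hG)).eventually_gt_atTop B
  obtain ⟨r, hr₀, hφr, hr, hrB⟩ := (hlower.and_eventually ((hφ.eventually_gt_atTop 0).and
    (((eventually_all_finset _).2 hupper).and hB))).exists
  refine ⟨r, fun hsum => hrB.not_ge ?_⟩
  have hF₀ : Real.exp (c * φ r) < ‖F i₀ r‖ := by
    have hlog : c * φ r < Real.log ‖F i₀ r‖ := (lt_div_iff₀ hφr).1 hr₀
    have hpos : 0 < ‖F i₀ r‖ := by
      by_contra! h
      rw [le_antisymm h (norm_nonneg _), Real.log_zero] at hlog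
      exact hlog.not_ge (mul_nonneg hc hφr.le)
    exact (Real.lt_log_iff_exp_lt hpos).1 hlog
  have hF : ∀ i ∈ T.erase i₀, ‖F i r‖ ≤ Real.exp (c' * φ r) := fun i hi =>
    (Real.le_exp_log _).trans (Real.exp_le_exp.2 ((div_lt_iff₀ hφr).1 (hr i hi)).le)
  have key : ‖G i₀‖ * Real.exp (c * φ r) ≤ B * Real.exp (c' * φ r) := calc
    ‖G i₀‖ * Real.exp (c * φ r) ≤ ‖G i₀ * F i₀ r‖ := by
        rw [norm_mul]; exact mul_le_mul_of_nonneg_left hF₀.le (norm_nonneg _)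
    _ = ‖∑ i ∈ T.erase i₀, G i * F i r‖ := by
        rw [eq_neg_of_add_eq_zero_left ((T.add_sum_erase _ hi₀).trans hsum), norm_neg]
    _ ≤ ∑ i ∈ T.erase i₀, ‖G i‖ * Real.exp (c' * φ r) := by
        refine (norm_sum_le _ _).trans (Finset.sum_le_sum fun i hi => ?_)
        rw [norm_mul]; exact mul_le_mul_of_nonneg_left (hF i hi) (norm_nonneg _)
    _ = B * Real.exp (c' * φ r) := (Finset.sum_mul _ _ _).symm
  rw [show c * φ r = (c - c') * φ r + c' * φ r by ring, Real.exp_add, ← mul_assoc] at key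
  exact le_of_mul_le_mul_right key (Real.exp_pos _)

theorem exists_sum_mul_ne_zero_of_limsup_lt (hφ : Tendsto φ atTop atTop) (hi₀ : i₀ ∈ T)
    (hG : G i₀ ≠ 0) {a b : ℝ} (hb : 0 < b) (hab : a < b)
    (hlower : b ≤ limsup (fun r => Real.log ‖F i₀ r‖ / φ r) atTop)
    (hlower₀ : limsup (fun r => Real.log ‖F i₀ r‖ / φ r) atTop ≠ 0)
    (hupper : ∀ i ∈ T.erase i₀, limsup (fun r => Real.log ‖F i r‖ / φ r) atTop ≤ a)
    (hupper₀ : ∀ i ∈ T.erase i₀, limsup (fun r => Real.log ‖F i r‖ / φ r) atTop ≠ 0) :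
    ∃ r, ∑ i ∈ T, G i * F i r ≠ 0 := by
  obtain ⟨c', hac', hc'b⟩ := exists_between hab
  obtain ⟨c, hc, hcb⟩ := exists_between (max_lt hc'b hb)
  exact exists_sum_mul_ne_zero_of_dominant hφ hi₀ hG ((le_max_right _ _).trans hc.le)
    ((le_max_left _ _).trans_lt hc)
    (Real.frequently_lt_of_lt_limsup_of_ne_zero hlower₀ (hcb.trans_le hlower))
    fun i hi => Real.eventually_lt_of_limsup_lt_of_ne_zero (hupper₀ i hi)
      ((hupper i hi).trans_lt hac')

end Growth

section Cyclic

theorem ZMod.exists_mem_sub_one_notMem {N : ℕ} [NeZero N] {s : Set (ZMod N)} (hs : s.Nonempty)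
    (hs' : s ≠ univ) : ∃ x ∈ s, x - 1 ∉ s := by
  by_contra! h
  obtain ⟨x, hx⟩ := hs
  have hsub : ∀ k : ℕ, x - k ∈ s := fun k => by
    induction k with
    | zero => simpa
    | succ k ih => simpa [sub_add_eq_sub_sub] using h _ ih
  exact hs' (eq_univ_of_forall fun y => by simpa using hsub (x - y).val)

theorem ZMod.natCast_inj_of_lt {N a b : ℕ} (ha : a < N) (hb : b < N) (h : (a : ZMod N) = b) :
    a = b := by
  rwa [ZMod.natCast_eq_natCast_iff', Nat.mod_eq_of_lt ha, Nat.mod_eq_of_lt hb] at h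

theorem ZMod.natCast_eq_sub_of_val_eq {N : ℕ} [NeZero N] {a b c e : ℕ}
    (h : ((a + b : ℕ) - c : ZMod N).val = b + e) : (c : ZMod N) = a - e := by
  have h' := congrArg (Nat.cast : ℕ → ZMod N) h
  rw [ZMod.natCast_zmod_val] at h'
  push_cast at h'
  linear_combination -h'

theorem ZMod.val_add_sub_ne {N : ℕ} [NeZero N] {a b c : ℕ} (ha : a < N) (hc : c < N)
    (hca : c ≠ a) (hpred : (c : ZMod N) ≠ a - 1) :
    (((a + b : ℕ) : ZMod N) - c).val ≠ b ∧ (((a + b : ℕ) : ZMod N) - c).val ≠ b + 1 :=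
  ⟨fun h => hca (natCast_inj_of_lt hc ha (by simpa using natCast_eq_sub_of_val_eq (e := 0) h)),
    fun h => hpred (by exact_mod_cast natCast_eq_sub_of_val_eq (e := 1) h)⟩

theorem exists_mem_forall_natCast_ne_sub_one {N : ℕ} [NeZero N] {T : Finset ℕ}
    (hT : T ⊂ Finset.range N) (hne : T.Nonempty) :
    ∃ ν₀ ∈ T, ∀ ν ∈ T, (ν : ZMod N) ≠ ν₀ - 1 := by
  obtain ⟨μ, hμ, hμT⟩ := Finset.exists_of_ssubset hT
  have hμ' : (μ : ZMod N) ∉ (Nat.cast : ℕ → ZMod N) '' T := by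
    rintro ⟨ν, hν, hνμ⟩
    exact hμT (ZMod.natCast_inj_of_lt (Finset.mem_range.1 (hT.subset hν))
      (Finset.mem_range.1 hμ) hνμ ▸ hν)
  obtain ⟨_, ⟨ν₀, hν₀, rfl⟩, hpred⟩ := ZMod.exists_mem_sub_one_notMem
    ((Finset.coe_nonempty.2 hne).image _) fun h => hμ' (h ▸ mem_univ _)
  exact ⟨ν₀, hν₀, fun ν hν h => hpred ⟨ν, hν, h⟩⟩

theorem Function.Periodic.apply_int_mul_add_eq_val {α : Type*} {f : ℝ → α} {N : ℕ} [NeZero N]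
    {δ : ℝ} (hf : Function.Periodic f (N * δ)) (j : ℤ) (s : ℝ) :
    f (j * δ + s) = f ((j : ZMod N).val * δ + s) := by
  have hj : (j : ℝ) = (j : ZMod N).val + N * (j / N : ℤ) := by
    have h := Int.emod_add_mul_ediv j N
    rw [← ZMod.val_intCast] at h
    exact_mod_cast h.symm
  rw [show (j : ℝ) * δ + s = ((j : ZMod N).val * δ + s) + (j / N : ℤ) * (N * δ) by rw [hj]; ring,
    hf.int_mul (j / N)]

end Cyclic

section Sampling

def samplePoint (m k : ℕ) : ℝ := k * (2 * π / (m + 1)) + 2 * π / (m + 1) / 8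

-- For `ρ = (m+1)/m`, `ρ * samplePoint m k = (8k+1) π/(4m)`; the phase is this shifted by `∓π`,
-- after `samplePoint m k` has been reduced mod `2π` to `[-π, π]`.
def samplePhase (m k : ℕ) : ℤ := if 2 * k ≤ m then 8 * k + 1 - 4 * m else 8 * k - 4 * m - 7

variable {m : ℕ}

theorem samplePhase_odd (m k : ℕ) : Odd (samplePhase m k) := by
  unfold samplePhase; split_ifs <;> exact Int.odd_iff.2 (by omega)

theorem abs_samplePhase_half_le (m : ℕ) : |samplePhase m (m / 2)| ≤ 3 := by
  unfold samplePhase; rw [if_pos (show 2 * (m / 2) ≤ m by omega), abs_le]; omega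

theorem abs_samplePhase_le {k : ℕ} (hm : 0 < m) (hk : k ≤ m) : |samplePhase m k| ≤ 4 * m := by
  unfold samplePhase
  split_ifs <;> rw [abs_le] <;> constructor <;> omega

theorem five_le_abs_samplePhase {k : ℕ} (h₁ : k ≠ m / 2) (h₂ : k ≠ m / 2 + 1) :
    5 ≤ |samplePhase m k| := by
  unfold samplePhase; split_ifs <;> rw [le_abs] <;> omega

theorem apply_samplePoint_eq_cos {ρ : ℝ} (hm : 0 < m) (hρ : ρ = (m + 1) / m) {h0 : ℝ → ℝ}
    (hper : Function.Periodic h0 (2 * π))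
    (hform : ∀ ϑ : ℝ, |ϑ| ≤ π → h0 ϑ = -(1 / ρ) * Real.cos (ρ * ϑ)) {k : ℕ} (hk : k ≤ m) :
    h0 (samplePoint m k) = Real.cos (samplePhase m k * (π / (4 * m))) / ρ := by
  have hcos : ∀ t : ℝ, |t| ≤ 1 → ∀ z : ℤ,
      Real.cos (ρ * (t * π)) = -Real.cos (z * (π / (4 * m))) →
      h0 (t * π) = Real.cos (z * (π / (4 * m))) / ρ := by
    intro t ht z hz
    have htπ : |t * π| ≤ π := by
      rw [abs_mul, abs_of_pos Real.pi_pos]; exact mul_le_of_le_one_left Real.pi_pos.le ht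
    rw [hform _ htπ, hz]
    ring
  have hm' : (0 : ℝ) < m := by exact_mod_cast hm
  have hk' : (k : ℝ) ≤ m := by exact_mod_cast hk
  have hpt : samplePoint m k = (8 * k + 1) / (4 * (m + 1)) * π := by
    unfold samplePoint; field_simp; ring
  have hρt : ρ * ((8 * k + 1) / (4 * (m + 1)) * π) = (8 * k + 1) * (π / (4 * m)) := by
    rw [hρ]; field_simp
  unfold samplePhase
  split_ifs with h2k
  · have h2k' : 2 * (k : ℝ) ≤ m := by exact_mod_cast h2k
    rw [hpt]
    refine hcos _ (abs_le.2 ⟨?_, ?_⟩) _ ?_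
    · have : (0 : ℝ) ≤ (8 * k + 1) / (4 * (m + 1)) := by positivity
      linarith
    · rw [div_le_one (by positivity)]; linarith
    · rw [hρt, ← Real.cos_add_pi]; push_cast; congr 1; field_simp; ring
  · have h2k' : (m : ℝ) + 1 ≤ 2 * k := by exact_mod_cast (by omega : m + 1 ≤ 2 * k)
    rw [← hper.sub_eq, hpt, ← sub_mul]
    refine hcos _ (abs_le.2 ⟨?_, ?_⟩) _ ?_
    · rw [le_sub_iff_add_le, le_div_iff₀ (by positivity)]; linarith
    · rw [sub_le_iff_le_add, div_le_iff₀ (by positivity)]; linarith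
    · rw [sub_mul, mul_sub, hρt, ← Real.cos_sub_pi, hρ]; push_cast; congr 1; field_simp; ring

theorem mul_pi_div_four_mul_le_pi (hm : 0 < m) {c : ℝ} (hc : c ≤ 4 * m) :
    c * (π / (4 * m)) ≤ π := by
  rw [mul_div_assoc', div_le_iff₀ (by positivity)]
  nlinarith [Real.pi_pos]

-- The zeros of `cos` are the odd multiples of `π/2 = 2m · π/(4m)`, while the phase is odd.
theorem cos_samplePhase_ne_zero (hm : 0 < m) (k : ℕ) :
    Real.cos (samplePhase m k * (π / (4 * m))) ≠ 0 := by
  intro h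
  obtain ⟨l, hl⟩ := Real.cos_eq_zero_iff.1 h
  have hm' : (m : ℝ) ≠ 0 := by positivity
  have : (samplePhase m k : ℝ) = ((2 * l + 1) * m : ℤ) + ((2 * l + 1) * m : ℤ) := by
    push_cast
    field_simp at hl
    linarith
  exact Int.not_even_iff_odd.2 (samplePhase_odd m k) ⟨_, by exact_mod_cast this⟩

theorem cos_three_mul_le_cos_samplePhase_half (hm : 0 < m) :
    Real.cos (3 * (π / (4 * m))) ≤ Real.cos (samplePhase m (m / 2) * (π / (4 * m))) := by
  have hβ : 0 < π / (4 * m) := by positivity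
  have h3 : (3 : ℝ) ≤ 4 * m := by
    have : (1 : ℝ) ≤ m := by exact_mod_cast hm
    linarith
  apply Real.cos_le_cos_of_abs_le
  · rw [abs_of_pos (by positivity)]; exact mul_pi_div_four_mul_le_pi hm h3
  · rw [abs_mul, abs_mul, abs_of_pos hβ, abs_of_pos (by norm_num : (0 : ℝ) < 3)]
    gcongr
    exact_mod_cast abs_samplePhase_half_le m

theorem cos_samplePhase_le_cos_five_mul {k : ℕ} (hm : 0 < m) (hk : k ≤ m) (h₁ : k ≠ m / 2)
    (h₂ : k ≠ m / 2 + 1) :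
    Real.cos (samplePhase m k * (π / (4 * m))) ≤ Real.cos (5 * (π / (4 * m))) := by
  have hβ : 0 < π / (4 * m) := by positivity
  apply Real.cos_le_cos_of_abs_le
  · rw [abs_mul, abs_of_pos hβ]
    exact mul_pi_div_four_mul_le_pi hm (by exact_mod_cast abs_samplePhase_le hm hk)
  · rw [abs_mul, abs_mul, abs_of_pos hβ, abs_of_pos (by norm_num : (0 : ℝ) < 5)]
    gcongr
    exact_mod_cast five_le_abs_samplePhase h₁ h₂

theorem cos_five_mul_lt_cos_three_mul (hm : 2 ≤ m) :
    Real.cos (5 * (π / (4 * m))) < Real.cos (3 * (π / (4 * m))) := by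
  have hm' : (2 : ℝ) ≤ m := by exact_mod_cast hm
  apply Real.cos_lt_cos_of_nonneg_of_le_pi (by positivity)
    (mul_pi_div_four_mul_le_pi (by omega) (by linarith))
  gcongr
  norm_num

theorem cos_three_mul_pos (hm : 2 ≤ m) : 0 < Real.cos (3 * (π / (4 * m))) := by
  have hm' : (2 : ℝ) ≤ m := by exact_mod_cast hm
  refine Real.cos_pos_of_mem_Ioo
    ⟨by linarith [Real.pi_pos, show 0 < 3 * (π / (4 * m)) by positivity], ?_⟩
  rw [mul_div_assoc', div_lt_iff₀ (by positivity)]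
  nlinarith [Real.pi_pos]

end Sampling

section Independence

variable {m : ℕ} {ρ : ℝ} {h0 : ℝ → ℝ} {Λ : ℕ → ℂ → ℂ}

theorem plIndicator_samplePoint (hm : 0 < m) (hρ : ρ = (m + 1) / m)
    (hper : Function.Periodic h0 (2 * π))
    (hform : ∀ ϑ : ℝ, |ϑ| ≤ π → h0 ϑ = -(1 / ρ) * Real.cos (ρ * ϑ))
    (hΛ : ∀ ν ≤ m, ∀ ϑ : ℝ, plIndicator (Λ ν) ρ ϑ = h0 (ϑ - ν * (2 * π / (m + 1))))
    {ν : ℕ} (hν : ν ≤ m) (j : ℕ) :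
    plIndicator (Λ ν) ρ (samplePoint m j) =
      Real.cos (samplePhase m ((j : ZMod (m + 1)) - ν).val * (π / (4 * m))) / ρ := by
  have hper' : Function.Periodic h0 ((m + 1 : ℕ) * (2 * π / (m + 1))) := by
    convert hper using 1; push_cast; field_simp
  rw [hΛ ν hν, ← apply_samplePoint_eq_cos hm hρ hper hform (Nat.lt_succ_iff.1 (ZMod.val_lt _)),
    show samplePoint m j - ν * (2 * π / (m + 1))
      = ((j : ℤ) - ν : ℤ) * (2 * π / (m + 1)) + 2 * π / (m + 1) / 8 by
        unfold samplePoint; push_cast; ring,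
    hper'.apply_int_mul_add_eq_val]
  push_cast
  rfl

theorem eq_zero_of_sum_smul_eq_zero (hm : 2 ≤ m) (hρ : ρ = (m + 1) / m)
    (hper : Function.Periodic h0 (2 * π))
    (hform : ∀ ϑ : ℝ, |ϑ| ≤ π → h0 ϑ = -(1 / ρ) * Real.cos (ρ * ϑ))
    (hΛ : ∀ ν ≤ m, ∀ ϑ : ℝ, plIndicator (Λ ν) ρ ϑ = h0 (ϑ - ν * (2 * π / (m + 1))))
    {T : Finset ℕ} (hT : T ⊂ Finset.range (m + 1)) {g : ℕ → ℂ}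
    (hg : ∑ ν ∈ T, g ν • Λ ν = 0) : ∀ ν ∈ T, g ν = 0 := by
  classical
  by_contra! hne
  set T₁ := T.filter (g · ≠ 0)
  have hT₁ : T₁ ⊂ Finset.range (m + 1) := (Finset.filter_subset _ _).trans_ssubset hT
  have hle : ∀ ν ∈ T₁, ν ≤ m := fun ν hν => Nat.lt_succ_iff.1 (Finset.mem_range.1 (hT₁.subset hν))
  obtain ⟨ν₀, hν₀, hpred⟩ := exists_mem_forall_natCast_ne_sub_one hT₁
    (by obtain ⟨ν, hν, hgν⟩ := hne; exact ⟨ν, Finset.mem_filter.2 ⟨hν, hgν⟩⟩)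
  set k₀ := m / 2
  set ϑ := samplePoint m (ν₀ + k₀)
  set K : ℕ → ℕ := fun ν => (((ν₀ + k₀ : ℕ) : ZMod (m + 1)) - ν).val
  have hρ0 : 0 < ρ := by rw [hρ]; positivity
  have hind : ∀ ν ≤ m, plIndicator (Λ ν) ρ ϑ = Real.cos (samplePhase m (K ν) * (π / (4 * m))) / ρ :=
    fun ν hν => plIndicator_samplePoint (by omega) hρ hper hform hΛ hν _
  have hind₀ : ∀ ν ≤ m, plIndicator (Λ ν) ρ ϑ ≠ 0 := fun ν hν => by
    rw [hind ν hν]; exact div_ne_zero (cos_samplePhase_ne_zero (by omega) _) hρ0.ne'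
  have hKν₀ : K ν₀ = k₀ := by
    simp only [K, Nat.cast_add, add_sub_cancel_left]
    exact ZMod.val_natCast_of_lt (by omega)
  have hlower : Real.cos (3 * (π / (4 * m))) / ρ ≤ plIndicator (Λ ν₀) ρ ϑ := by
    rw [hind ν₀ (hle ν₀ hν₀), hKν₀]
    exact div_le_div_of_nonneg_right (cos_three_mul_le_cos_samplePhase_half (by omega)) hρ0.le
  have hupper : ∀ ν ∈ T₁.erase ν₀, plIndicator (Λ ν) ρ ϑ ≤ Real.cos (5 * (π / (4 * m))) / ρ := by
    intro ν hν
    obtain ⟨hνν₀, hν⟩ := Finset.mem_erase.1 hν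
    obtain ⟨hKν, hKν'⟩ := ZMod.val_add_sub_ne (b := k₀) (Nat.lt_succ_of_le (hle ν₀ hν₀))
      (Nat.lt_succ_of_le (hle ν hν)) hνν₀ (hpred ν hν)
    rw [hind ν (hle ν hν)]
    exact div_le_div_of_nonneg_right (cos_samplePhase_le_cos_five_mul (by omega)
      (Nat.lt_succ_iff.1 (ZMod.val_lt _)) hKν hKν') hρ0.le
  obtain ⟨r, hr⟩ := exists_sum_mul_ne_zero_of_limsup_lt (T := T₁) (G := g)
    (F := fun ν r => Λ ν (r * Complex.exp (I * ϑ))) (tendsto_rpow_atTop hρ0) hν₀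
    (Finset.mem_filter.1 hν₀).2 (div_pos (cos_three_mul_pos hm) hρ0)
    (div_lt_div_of_pos_right (cos_five_mul_lt_cos_three_mul hm) hρ0) hlower
    (hind₀ ν₀ (hle ν₀ hν₀)) hupper fun ν hν => hind₀ ν (hle ν (Finset.mem_of_mem_erase hν))
  apply hr
  rw [Finset.sum_filter_of_ne fun ν _ h => left_ne_zero_of_mul h]
  simpa using congrFun hg (r * Complex.exp (I * ϑ))

end Independence

theorem statement14_general
    (n q : ℕ) (hnq : 2 ≤ n - q)
    (ρ : ℝ) (hρ : ρ = 1 + 1 / ((n : ℝ) - q))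
    -- `h0` is the 2π-periodic function with `h0(ϑ) = −(1/ρ) cos(ρϑ)` for `|ϑ| ≤ π`
    (h0 : ℝ → ℝ) (hper : ∀ ϑ, h0 (ϑ + 2 * Real.pi) = h0 ϑ)
    (hform : ∀ ϑ : ℝ, |ϑ| ≤ Real.pi → h0 ϑ = -(1 / ρ) * Real.cos (ρ * ϑ))
    -- the functions `Λ_ν`, `0 ≤ ν ≤ n − q` : entire solutions of `L[w]=0` of order `ρ`
    -- with indicator `h_ν(ϑ) = h0(ϑ − 2νπ/(n−q+1))`
    (Λ : ℕ → ℂ → ℂ)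
    (hΛind : ∀ ν ≤ n - q, ∀ ϑ : ℝ,
      plIndicator (Λ ν) ρ ϑ = h0 (ϑ - 2 * ν * Real.pi / ((n : ℝ) - q + 1))) :
    ∀ S : Finset ℕ, S ⊆ Finset.range (n - q + 1) → S.card = n - q →
      LinearIndependent ℂ (fun ν : S => Λ ν) := by
  intro S hS hcard
  have hm : ((n : ℝ) - q) = (n - q : ℕ) := by rw [Nat.cast_sub (by omega)]
  refine linearIndepOn_finset_iff.2 fun g hg => eq_zero_of_sum_smul_eq_zero hnq ?_ hper hform
    (fun ν hν ϑ => ?_) (Finset.ssubset_iff_subset_ne.2 ⟨hS, fun h => ?_⟩) hg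
  · rw [hρ, hm]
    field_simp
  · rw [hΛind ν hν ϑ, hm]
    ring_nf
  · simp [h] at hcard

theorem statement14
    (n q : ℕ) (a b : ℕ → ℂ)
    (hn : 2 ≤ n) (hq : q < n) (hnq : 2 ≤ n - q)
    (hbq : b q = (-1 : ℂ) ^ (n - q + 1)) (hbq0 : ∀ j, q < j → b j = 0)
    (ha0b0 : a 0 ≠ 0 ∨ b 0 ≠ 0)
    (ρ : ℝ) (hρ : ρ = 1 + 1 / ((n : ℝ) - q))
    -- `h0` is the 2π-periodic function with `h0(ϑ) = −(1/ρ) cos(ρϑ)` for `|ϑ| ≤ π`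
    (h0 : ℝ → ℝ) (hper : ∀ ϑ, h0 (ϑ + 2 * Real.pi) = h0 ϑ)
    (hform : ∀ ϑ : ℝ, |ϑ| ≤ Real.pi → h0 ϑ = -(1 / ρ) * Real.cos (ρ * ϑ))
    -- the functions `Λ_ν`, `0 ≤ ν ≤ n − q` : entire solutions of `L[w]=0` of order `ρ`
    -- with indicator `h_ν(ϑ) = h0(ϑ − 2νπ/(n−q+1))`
    (Λ : ℕ → ℂ → ℂ)
    (hΛsol : ∀ ν ≤ n - q, SolvesL n a b (Λ ν))
    (hΛord : ∀ ν ≤ n - q, orderOfGrowth (Λ ν) = ρ)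
    (hΛind : ∀ ν ≤ n - q, ∀ ϑ : ℝ,
      plIndicator (Λ ν) ρ ϑ = h0 (ϑ - 2 * ν * Real.pi / ((n : ℝ) - q + 1))) :
    ∀ S : Finset ℕ, S ⊆ Finset.range (n - q + 1) → S.card = n - q →
      LinearIndependent ℂ (fun ν : S => Λ ν) :=
  statement14_general n q hnq ρ hρ h0 hper hform Λ hΛind
end
end

section
/- Let φ(t) = exp(t²/2 + ψ(t)) be holomorphic on {t : |t| > R_0, |arg t| < π}, where ψ is holomorphic there and |ψ(t)| ≤ C|t|. Let 0 < θ < π/4 and λ > 1 with λθ < π/4, let z ∈ ℂ, and for r > R_0 let Γ_r be the arc t = i r e^{−iϑ}, 0 ≤ ϑ ≤ λθ. Then |(1/(2πi)) ∫_{Γ_r} φ(t)e^{−zt} dt| ≤ (r/8) exp(−(r²/2)cos(2λθ) + r(|z| + C)), and in particular this integral tends to 0 as r → ∞. -/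
open Complex MeasureTheory Filter Set

noncomputable section

/-- The integral `(1/(2πi)) ∫_{Γ_r} φ(t) e^{-zt} dt` over the arc
`Γ_r : t = i r e^{-iϑ}`, `0 ≤ ϑ ≤ λθ`. -/
def ArcIntegral (φ : ℂ → ℂ) (r lt : ℝ) (z : ℂ) : ℂ :=
  (1 / (2 * Real.pi * Complex.I)) *
    ∫ ϑ in (0:ℝ)..lt,
      φ (Complex.I * r * Complex.exp (-Complex.I * ϑ)) *
        Complex.exp (-z * (Complex.I * r * Complex.exp (-Complex.I * ϑ))) *
        ((r : ℂ) * Complex.exp (-Complex.I * ϑ))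

/-!
On `Γ_r` the point `t = i r e^{-iϑ}` has modulus `r` and `Re (t²) = -r² cos 2ϑ ≤ -r² cos 2λθ`,
so `|φ(t) e^{-zt}| ≤ exp (-(r²/2) cos 2λθ + r (|z| + C))`. The arc has length `rλθ ≤ πr/4`, which
gives the bound; since `cos 2λθ > 0`, the Gaussian factor beats everything else as `r → ∞`.
-/

lemma re_I_mul_exp_neg_I_mul (r ϑ : ℝ) : (I * r * exp (-I * ϑ)).re = r * Real.sin ϑ := by
  simp [Complex.mul_re, Complex.exp_re, Complex.exp_im]

lemma im_I_mul_exp_neg_I_mul (r ϑ : ℝ) : (I * r * exp (-I * ϑ)).im = r * Real.cos ϑ := by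
  simp [Complex.mul_im, Complex.exp_re, Complex.exp_im]

lemma norm_I_mul_exp_neg_I_mul {r : ℝ} (ϑ : ℝ) (hr : 0 ≤ r) : ‖I * r * exp (-I * ϑ)‖ = r := by
  simp [Complex.norm_exp, abs_of_nonneg hr]

lemma re_sq_I_mul_exp_neg_I_mul (r ϑ : ℝ) :
    ((I * r * exp (-I * ϑ)) ^ 2).re = -(r ^ 2 * Real.cos (2 * ϑ)) := by
  rw [sq, Complex.mul_re, re_I_mul_exp_neg_I_mul, im_I_mul_exp_neg_I_mul, Real.cos_two_mul]
  linear_combination r ^ 2 * Real.sin_sq_add_cos_sq ϑ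

lemma I_mul_exp_neg_I_mul_mem_sector {R0 r ϑ : ℝ} (hR0 : 0 ≤ R0) (hr : R0 < r)
    (hϑ₀ : 0 ≤ ϑ) (hϑπ : ϑ ≤ Real.pi) : I * r * exp (-I * ϑ) ∈ Sector R0 := by
  refine ⟨by rwa [norm_I_mul_exp_neg_I_mul ϑ (hR0.trans hr.le)], abs_lt.2 ⟨neg_pi_lt_arg _, ?_⟩⟩
  rw [arg_lt_pi_iff, re_I_mul_exp_neg_I_mul]
  exact Or.inl (mul_nonneg (hR0.trans hr.le) (Real.sin_nonneg_of_nonneg_of_le_pi hϑ₀ hϑπ))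

section Bound

variable {R0 C : ℝ} {φ ψ : ℂ → ℂ} (z : ℂ)

lemma norm_arcIntegrand_le (hψb : ∀ t ∈ Sector R0, ‖ψ t‖ ≤ C * ‖t‖)
    (hφ : ∀ t ∈ Sector R0, φ t = exp (t ^ 2 / 2 + ψ t)) (hR0 : 0 ≤ R0) {r α ϑ : ℝ} (hr : R0 < r)
    (hϑ₀ : 0 ≤ ϑ) (hϑα : ϑ ≤ α) (hα : α ≤ Real.pi / 2) :
    ‖φ (I * r * exp (-I * ϑ)) * exp (-z * (I * r * exp (-I * ϑ))) * (r * exp (-I * ϑ))‖ ≤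
      r * Real.exp (-(r ^ 2 / 2) * Real.cos (2 * α) + r * (‖z‖ + C)) := by
  have hr₀ : 0 ≤ r := hR0.trans hr.le
  set t := I * r * exp (-I * ϑ)
  have ht : t ∈ Sector R0 := I_mul_exp_neg_I_mul_mem_sector hR0 hr hϑ₀ (by linarith)
  have hnorm : ‖t‖ = r := norm_I_mul_exp_neg_I_mul ϑ hr₀
  have hcos : Real.cos (2 * α) ≤ Real.cos (2 * ϑ) :=
    Real.cos_le_cos_of_nonneg_of_le_pi (by linarith) (by linarith) (by linarith)
  have hsq : (t ^ 2 / 2).re ≤ -(r ^ 2 / 2) * Real.cos (2 * α) := by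
    rw [div_ofNat_re, re_sq_I_mul_exp_neg_I_mul]
    nlinarith [sq_nonneg r]
  have hψt : (ψ t).re ≤ C * r := (re_le_norm _).trans (hnorm ▸ hψb t ht)
  have hzt : (-z * t).re ≤ ‖z‖ * r :=
    (re_le_norm _).trans (by rw [norm_mul, norm_neg, hnorm])
  calc ‖φ t * exp (-z * t) * (r * exp (-I * ϑ))‖
      = Real.exp ((t ^ 2 / 2 + ψ t + -z * t).re) * r := by
        rw [hφ t ht, ← Complex.exp_add, norm_mul, norm_mul, norm_exp, norm_exp]
        simp [abs_of_nonneg hr₀]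
    _ ≤ Real.exp (-(r ^ 2 / 2) * Real.cos (2 * α) + r * (‖z‖ + C)) * r := by
        gcongr
        simp only [add_re]
        linarith
    _ = _ := mul_comm _ _

lemma norm_arcIntegral_le (hψb : ∀ t ∈ Sector R0, ‖ψ t‖ ≤ C * ‖t‖)
    (hφ : ∀ t ∈ Sector R0, φ t = exp (t ^ 2 / 2 + ψ t)) (hR0 : 0 ≤ R0) {r α : ℝ} (hr : R0 < r)
    (hα₀ : 0 ≤ α) (hα : α ≤ Real.pi / 2) :
    ‖ArcIntegral φ r α z‖ ≤
      α / (2 * Real.pi) * (r * Real.exp (-(r ^ 2 / 2) * Real.cos (2 * α) + r * (‖z‖ + C))) := by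
  have hconst : ‖(1 / (2 * Real.pi * I) : ℂ)‖ = 1 / (2 * Real.pi) := by
    simp [abs_of_pos Real.pi_pos]
  rw [ArcIntegral, norm_mul, hconst]
  refine (mul_le_mul_of_nonneg_left (intervalIntegral.norm_integral_le_of_norm_le_const
    (C := r * Real.exp (-(r ^ 2 / 2) * Real.cos (2 * α) + r * (‖z‖ + C))) fun ϑ hϑ => ?_)
    (by positivity)).trans_eq ?_
  · rw [Set.uIoc_of_le hα₀] at hϑ
    exact norm_arcIntegrand_le z hψb hφ hR0 hr hϑ.1.le hϑ.2 hα
  · rw [sub_zero, abs_of_nonneg hα₀]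
    ring

end Bound

lemma tendsto_neg_mul_sq_add_mul_atBot {a : ℝ} (ha : 0 < a) (b : ℝ) :
    Tendsto (fun r : ℝ => -a * r ^ 2 + b * r) atTop atBot := by
  have hlin : Tendsto (fun r : ℝ => b + -a * r) atTop atBot :=
    tendsto_atBot_add_const_left _ b (tendsto_id.const_mul_atTop_of_neg (by linarith))
  exact (tendsto_id.atTop_mul_atBot₀ hlin).congr fun r => by simp only [id]; ring

lemma tendsto_mul_exp_neg_mul_sq_add_mul {a : ℝ} (ha : 0 < a) (b : ℝ) :
    Tendsto (fun r : ℝ => r * Real.exp (-a * r ^ 2 + b * r)) atTop (nhds 0) := by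
  have h := (Real.tendsto_pow_mul_exp_neg_atTop_nhds_zero 1).mul
    (Real.tendsto_exp_atBot.comp (tendsto_neg_mul_sq_add_mul_atBot ha (b + 1)))
  rw [mul_zero] at h
  refine h.congr fun r => ?_
  simp only [Function.comp_apply, pow_one, mul_assoc, ← Real.exp_add]
  ring_nf

theorem statement19_general
    (R0 C : ℝ) (hR0 : 0 ≤ R0) (φ ψ : ℂ → ℂ)
    (hψb : ∀ t ∈ Sector R0, ‖ψ t‖ ≤ C * ‖t‖)
    (hφ : ∀ t ∈ Sector R0, φ t = Complex.exp (t ^ 2 / 2 + ψ t))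
    (θ lam : ℝ) (hθ : 0 < θ) (hlam : 1 < lam)
    (hlamθ : lam * θ < Real.pi / 4) (z : ℂ) :
    (∀ r : ℝ, R0 < r →
      ‖ArcIntegral φ r (lam * θ) z‖ ≤
        (r / 8) * Real.exp (-(r ^ 2 / 2) * Real.cos (2 * lam * θ) + r * (‖z‖ + C))) ∧
    Filter.Tendsto (fun r : ℝ => ArcIntegral φ r (lam * θ) z) Filter.atTop (nhds 0) := by
  have hα₀ : 0 < lam * θ := mul_pos (by linarith) hθ
  have hcos : 0 < Real.cos (2 * lam * θ) :=
    Real.cos_pos_of_mem_Ioo ⟨by linarith [Real.pi_pos], by linarith⟩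
  have hbound : ∀ r : ℝ, R0 < r → ‖ArcIntegral φ r (lam * θ) z‖ ≤
      (r / 8) * Real.exp (-(r ^ 2 / 2) * Real.cos (2 * lam * θ) + r * (‖z‖ + C)) := by
    intro r hr
    have hlen : lam * θ / (2 * Real.pi) ≤ 1 / 8 := by
      rw [div_le_div_iff₀ (by positivity) (by norm_num)]
      linarith
    have hr₀ : 0 ≤ r := hR0.trans hr.le
    rw [mul_assoc 2 lam θ]
    calc _ ≤ _ := norm_arcIntegral_le z hψb hφ hR0 hr hα₀.le (by linarith)
      _ ≤ 1 / 8 * (r * Real.exp (-(r ^ 2 / 2) * Real.cos (2 * (lam * θ)) + r * (‖z‖ + C))) := by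
        gcongr
      _ = _ := by ring
  refine ⟨hbound, squeeze_zero_norm' (eventually_gt_atTop R0 |>.mono hbound) ?_⟩
  have h := (tendsto_mul_exp_neg_mul_sq_add_mul (half_pos hcos) (‖z‖ + C)).const_mul (1 / 8)
  rw [mul_zero] at h
  exact h.congr fun r => by ring_nf

theorem statement19
    (R0 C : ℝ) (hR0 : 0 ≤ R0) (φ ψ : ℂ → ℂ)
    (hψd : DifferentiableOn ℂ ψ (Sector R0))
    (hψb : ∀ t ∈ Sector R0, ‖ψ t‖ ≤ C * ‖t‖)
    (hφ : ∀ t ∈ Sector R0, φ t = Complex.exp (t ^ 2 / 2 + ψ t))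
    (hφd : DifferentiableOn ℂ φ (Sector R0))
    (θ lam : ℝ) (hθ : 0 < θ) (hθ' : θ < Real.pi / 4) (hlam : 1 < lam)
    (hlamθ : lam * θ < Real.pi / 4) (z : ℂ) :
    (∀ r : ℝ, R0 < r →
      ‖ArcIntegral φ r (lam * θ) z‖ ≤
        (r / 8) * Real.exp (-(r ^ 2 / 2) * Real.cos (2 * lam * θ) + r * (‖z‖ + C))) ∧
    Filter.Tendsto (fun r : ℝ => ArcIntegral φ r (lam * θ) z) Filter.atTop (nhds 0) :=
  statement19_general R0 C hR0 φ ψ hψb hφ θ lam hθ hlam hlamθ z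
end
end
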